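/- arXiv:2601.05056 — 2 statements merged into one kernel-verified Lean document; each statement's English description precedes it below -/
import Mathlib

section
/- Let f_1, …, f_n : ℝ^d → ℝ each be convex, differentiable with L-Lipschitz gradients, and suppose f = (1/n) Σᵢ fᵢ is μ-strongly convex. Then for all x, y ∈ ℝ^d, ⟨∇f(x) − ∇f(y), x − y⟩ ≥ (μ/2)‖x − y‖₂² + (1/(2nL)) Σᵢ ‖∇fᵢ(x) − ∇fᵢ(y)‖₂². -/
open InnerProductSpace Finset

/-!
Adding the strong convexity inequality for `f` at `(x, y)` and at `(y, x)` gives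
`⟨∇f(x) − ∇f(y), x − y⟩ ≥ μ‖x − y‖²`. Each `fᵢ` is convex and `L`-smooth, so its gradient is
`1/L`-cocoercive: `⟨∇fᵢ(x) − ∇fᵢ(y), x − y⟩ ≥ ‖∇fᵢ(x) − ∇fᵢ(y)‖² / L` (compare the
first-order convexity bound with the descent-lemma bound at a gradient step), and averaging over `i`
bounds the same inner product by `(1/(nL)) Σᵢ ‖∇fᵢ(x) − ∇fᵢ(y)‖²`. The claim is half the sum of
the two bounds.
-/

section

variable {E : Type*} [NormedAddCommGroup E] [InnerProductSpace ℝ E]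

theorem add_le_inner_sub_of_forall_add_inner_le {F : E → ℝ} {G : E → E} {q : E → E → ℝ}
    (h : ∀ a b, F a + ⟪G a, b - a⟫_ℝ + q a b ≤ F b) (x y : E) :
    q x y + q y x ≤ ⟪G x - G y, x - y⟫_ℝ := by
  have hxy := h x y
  have hyx := h y x
  have hswap : ⟪G x, y - x⟫_ℝ = -⟪G x, x - y⟫_ℝ := by
    rw [← inner_neg_right, neg_sub]
  rw [inner_sub_left]
  linarith

variable [CompleteSpace E] {f : E → ℝ} {f' : E → E}

theorem HasGradientAt.hasDerivAt_comp_lineMap {g x y : E} {t : ℝ}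
    (h : HasGradientAt f g (AffineMap.lineMap x y t)) :
    HasDerivAt (f ∘ AffineMap.lineMap x y) ⟪g, y - x⟫_ℝ t := by
  have := h.hasFDerivAt.comp_hasDerivAt t AffineMap.hasDerivAt_lineMap
  rwa [toDual_apply_apply] at this

theorem ConvexOn.add_inner_le_of_hasGradientAt {s : Set E} {g x y : E} (hf : ConvexOn ℝ s f)
    (hx : x ∈ s) (hy : y ∈ s) (h : HasGradientAt f g x) :
    f x + ⟪g, y - x⟫_ℝ ≤ f y := by
  have hline := hf.comp_affineMap (AffineMap.lineMap x y)
  have h0 : (0 : ℝ) ∈ AffineMap.lineMap x y ⁻¹' s := by simpa using hx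
  have h1 : (1 : ℝ) ∈ AffineMap.lineMap x y ⁻¹' s := by simpa using hy
  have hderiv : HasDerivAt (f ∘ AffineMap.lineMap x y) ⟪g, y - x⟫_ℝ (0 : ℝ) :=
    HasGradientAt.hasDerivAt_comp_lineMap (by rwa [AffineMap.lineMap_apply_zero])
  have hslope := hline.le_slope_of_hasDerivAt h0 h1 one_pos hderiv
  simp only [slope_def_field, Function.comp_apply, AffineMap.lineMap_apply_zero,
    AffineMap.lineMap_apply_one, sub_zero, div_one] at hslope
  linarith

theorem le_add_inner_add_of_lipschitz_gradient {L : ℝ} (hf : ∀ z, HasGradientAt f (f' z) z)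
    (hlip : ∀ a b, ‖f' a - f' b‖ ≤ L * ‖a - b‖) (x y : E) :
    f y ≤ f x + ⟪f' x, y - x⟫_ℝ + L / 2 * ‖y - x‖ ^ 2 := by
  set v := y - x
  let φ : ℝ → ℝ := fun t =>
    f (AffineMap.lineMap x y t) - t * ⟪f' x, v⟫_ℝ - t ^ 2 * (L / 2) * ‖v‖ ^ 2
  have hderiv : ∀ t, HasDerivAt φ
      (⟪f' (AffineMap.lineMap x y t), v⟫_ℝ - ⟪f' x, v⟫_ℝ - t * L * ‖v‖ ^ 2) t := by
    intro t
    have hquad := ((hasDerivAt_pow 2 t).mul_const (L / 2)).mul_const (‖v‖ ^ 2)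
    refine (((hf _).hasDerivAt_comp_lineMap.sub
      ((hasDerivAt_id t).mul_const ⟪f' x, v⟫_ℝ)).sub hquad).congr_deriv ?_
    ring
  have hdiff : Differentiable ℝ φ := fun t => (hderiv t).differentiableAt
  have hanti : AntitoneOn φ (Set.Icc 0 1) := by
    refine antitoneOn_of_deriv_nonpos (convex_Icc 0 1) hdiff.continuous.continuousOn
      hdiff.differentiableOn fun t ht => ?_
    rw [interior_Icc] at ht
    have hdist : ‖AffineMap.lineMap x y t - x‖ = t * ‖v‖ := by
      rw [← vsub_eq_sub, AffineMap.lineMap_vsub_left, norm_smul, Real.norm_of_nonneg ht.1.le,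
        vsub_eq_sub]
    have hcs : ⟪f' (AffineMap.lineMap x y t) - f' x, v⟫_ℝ ≤ L * (t * ‖v‖) * ‖v‖ := by
      calc _ ≤ ‖f' (AffineMap.lineMap x y t) - f' x‖ * ‖v‖ := real_inner_le_norm _ _
        _ ≤ L * (t * ‖v‖) * ‖v‖ := by
          gcongr
          exact hdist ▸ hlip _ _
    rw [(hderiv t).deriv, ← inner_sub_left]
    linarith
  have h01 := hanti (Set.left_mem_Icc.mpr zero_le_one) (Set.right_mem_Icc.mpr zero_le_one)
    zero_le_one
  simp only [φ, AffineMap.lineMap_apply_zero, AffineMap.lineMap_apply_one] at h01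
  linarith

theorem ConvexOn.add_inner_add_norm_sub_sq_le {L : ℝ} (hL : 0 < L)
    (hconv : ConvexOn ℝ Set.univ f) (hf : ∀ z, HasGradientAt f (f' z) z)
    (hlip : ∀ a b, ‖f' a - f' b‖ ≤ L * ‖a - b‖) (a b : E) :
    f a + ⟪f' a, b - a⟫_ℝ + 1 / (2 * L) * ‖f' b - f' a‖ ^ 2 ≤ f b := by
  set u := f' b - f' a
  -- Compare both sides at the gradient step `z` from `b`, where the descent bound is sharpest.
  set z := b - L⁻¹ • u
  have hlower := hconv.add_inner_le_of_hasGradientAt (Set.mem_univ a) (Set.mem_univ z) (hf a)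
  have hupper := le_add_inner_add_of_lipschitz_gradient hf hlip b z
  have hzb : z - b = -(L⁻¹ • u) := by simp [z]
  have hza : z - a = (b - a) - L⁻¹ • u := by simp only [z]; abel
  rw [hzb, inner_neg_right, real_inner_smul_right, norm_neg, norm_smul,
    Real.norm_of_nonneg (inv_nonneg.mpr hL.le)] at hupper
  rw [hza, inner_sub_right, real_inner_smul_right] at hlower
  have hu : ⟪f' b, u⟫_ℝ - ⟪f' a, u⟫_ℝ = ‖u‖ ^ 2 := by
    rw [← inner_sub_left, real_inner_self_eq_norm_sq]
  have hu' : L⁻¹ * ⟪f' b, u⟫_ℝ - L⁻¹ * ⟪f' a, u⟫_ℝ = L⁻¹ * ‖u‖ ^ 2 := by rw [← mul_sub, hu]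
  have hcoef : 1 / (2 * L) * ‖u‖ ^ 2 = L⁻¹ * ‖u‖ ^ 2 - L / 2 * (L⁻¹ * ‖u‖) ^ 2 := by
    field_simp
    ring
  linarith

theorem ConvexOn.gradient_cocoercive {L : ℝ} (hL : 0 < L)
    (hconv : ConvexOn ℝ Set.univ f) (hf : ∀ z, HasGradientAt f (f' z) z)
    (hlip : ∀ a b, ‖f' a - f' b‖ ≤ L * ‖a - b‖) (x y : E) :
    ‖f' x - f' y‖ ^ 2 / L ≤ ⟪f' x - f' y, x - y⟫_ℝ := by
  have h := add_le_inner_sub_of_forall_add_inner_le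
    (hconv.add_inner_add_norm_sub_sq_le hL hf hlip) x y
  rw [norm_sub_rev (f' y)] at h
  convert h using 1
  field_simp
  ring

end

theorem stmt3_general {d n : ℕ}
    (f : Fin n → EuclideanSpace ℝ (Fin d) → ℝ)
    (f' : Fin n → EuclideanSpace ℝ (Fin d) → EuclideanSpace ℝ (Fin d))
    (L μ : ℝ) (hL : 0 < L)
    (hconv : ∀ i, ConvexOn ℝ Set.univ (f i))
    (hdiff : ∀ i x, HasGradientAt (f i) (f' i x) x)
    (hlip : ∀ i x y, ‖f' i x - f' i y‖ ≤ L * ‖x - y‖)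
    (hsc : ∀ x y : EuclideanSpace ℝ (Fin d),
      (n : ℝ)⁻¹ * (∑ i, f i y) ≥
        (n : ℝ)⁻¹ * (∑ i, f i x) + (inner ℝ ((n : ℝ)⁻¹ • ∑ i, f' i x) (y - x) : ℝ) +
          (μ / 2) * ‖y - x‖ ^ 2) :
    ∀ x y : EuclideanSpace ℝ (Fin d),
      (inner ℝ ((n : ℝ)⁻¹ • ∑ i, f' i x - (n : ℝ)⁻¹ • ∑ i, f' i y) (x - y) : ℝ) ≥
        (μ / 2) * ‖x - y‖ ^ 2 + (1 / (2 * n * L)) * ∑ i, ‖f' i x - f' i y‖ ^ 2 := by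
  intro x y
  have hstrong := add_le_inner_sub_of_forall_add_inner_le
    (G := fun z => (n : ℝ)⁻¹ • ∑ i, f' i z) hsc x y
  have hcoco : (n : ℝ)⁻¹ * ∑ i, ‖f' i x - f' i y‖ ^ 2 / L ≤
      ⟪(n : ℝ)⁻¹ • ∑ i, f' i x - (n : ℝ)⁻¹ • ∑ i, f' i y, x - y⟫_ℝ := by
    rw [← smul_sub, real_inner_smul_left, ← sum_sub_distrib, sum_inner]
    gcongr with i
    exact (hconv i).gradient_cocoercive hL (hdiff i) (hlip i) x y
  rw [norm_sub_rev y] at hstrong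
  have hsplit : 1 / (2 * n * L) * ∑ i, ‖f' i x - f' i y‖ ^ 2 =
      ((n : ℝ)⁻¹ * ∑ i, ‖f' i x - f' i y‖ ^ 2 / L) / 2 := by
    rw [← sum_div]
    field_simp
  linarith

/-- Strongly convex case: for convex `L`-smooth components whose average `f` is
`μ`-strongly convex, `⟨∇f(x)−∇f(y), x−y⟩ ≥ (μ/2)‖x−y‖² + (1/(2nL)) Σᵢ ‖∇fᵢ(x)−∇fᵢ(y)‖²`. -/
theorem stmt3 {d n : ℕ} (hn : 0 < n)
    (f : Fin n → EuclideanSpace ℝ (Fin d) → ℝ)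
    (f' : Fin n → EuclideanSpace ℝ (Fin d) → EuclideanSpace ℝ (Fin d))
    (L μ : ℝ) (hL : 0 < L)
    (hconv : ∀ i, ConvexOn ℝ Set.univ (f i))
    (hdiff : ∀ i x, HasGradientAt (f i) (f' i x) x)
    (hlip : ∀ i x y, ‖f' i x - f' i y‖ ≤ L * ‖x - y‖)
    (hsc : ∀ x y : EuclideanSpace ℝ (Fin d),
      (n : ℝ)⁻¹ * (∑ i, f i y) ≥
        (n : ℝ)⁻¹ * (∑ i, f i x) + (inner ℝ ((n : ℝ)⁻¹ • ∑ i, f' i x) (y - x) : ℝ) +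
          (μ / 2) * ‖y - x‖ ^ 2) :
    ∀ x y : EuclideanSpace ℝ (Fin d),
      (inner ℝ ((n : ℝ)⁻¹ • ∑ i, f' i x - (n : ℝ)⁻¹ • ∑ i, f' i y) (x - y) : ℝ) ≥
        (μ / 2) * ‖x - y‖ ^ 2 + (1 / (2 * n * L)) * ∑ i, ‖f' i x - f' i y‖ ^ 2 :=
  stmt3_general f f' L μ hL hconv hdiff hlip hsc
end

section
/- Let f₁, …, f_n : ℝ^d → ℝ be differentiable with L-Lipschitz gradients. Let S be a finite set of pairs (i, u) with i ∈ {1,…,n} and, for each fixed i, orthonormal directions. Let G = Σ_{(i,u)∈S} ∇̂_u fᵢ(x; β) eᵢᵀ where ∇̂_u fᵢ(x; β) = ((fᵢ(x + βu) − fᵢ(x))/β) u, and let P(A) = Σ_{(i,u)∈S} u uᵀ A eᵢ eᵢᵀ. Then ‖G − P(∇F(x))‖_F² ≤ |S| L² β² / 4, where ∇F(x) is the d×n matrix with columns ∇fᵢ(x). -/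
open Finset

variable {d n : ℕ}

/-- The projection operator `P(A) = Σ_{(i,u)∈S} u uᵀ A eᵢ eᵢᵀ`. -/
def Pop (S : Finset (Fin n × EuclideanSpace ℝ (Fin d)))
    (A : Matrix (Fin d) (Fin n) ℝ) : Matrix (Fin d) (Fin n) ℝ :=
  ∑ p ∈ S, Matrix.of fun j i => if i = p.1 then p.2 j * ∑ l, p.2 l * A l p.1 else 0

/-- For each fixed index `i`, the directions paired with `i` in `S` are orthonormal. -/
def PerIndexOrthonormal (S : Finset (Fin n × EuclideanSpace ℝ (Fin d))) : Prop :=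
  (∀ p ∈ S, ‖p.2‖ = 1) ∧
    ∀ p ∈ S, ∀ q ∈ S, p.1 = q.1 → p.2 ≠ q.2 → (inner ℝ p.2 q.2 : ℝ) = 0

/-- Squared Frobenius norm. -/
def frobSq (A : Matrix (Fin d) (Fin n) ℝ) : ℝ := ∑ j, ∑ i, A j i ^ 2

/-!
Column `i` of `G − P(∇F(x))` is `∑_{(i,u) ∈ S} c_{i,u} u`, where
`c_{i,u} = (fᵢ(x + βu) − fᵢ(x))/β − ⟪u, ∇fᵢ(x)⟫` is the error of the two-point estimator, so by
per-index orthonormality the squared Frobenius norm is `∑_{(i,u) ∈ S} c_{i,u}²`. Each error is at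
most `Lβ/2` by the bound `|g(x + v) − g(x) − ⟪∇g(x), v⟫| ≤ L‖v‖²/2`, obtained by fencing
`t ↦ g(x + tv) − g(x) − t⟪∇g(x), v⟫` (derivative at most `Lt‖v‖²` in norm) by `Lt²‖v‖²/2`.
-/

section
variable {E : Type*} [NormedAddCommGroup E] [InnerProductSpace ℝ E] [CompleteSpace E]

theorem abs_sub_sub_inner_le_of_gradient_lipschitz {g : E → ℝ} {g' : E → E} {L : ℝ} {x : E}
    (hg : ∀ y, HasGradientAt g (g' y) y) (hlip : ∀ y, ‖g' y - g' x‖ ≤ L * ‖y - x‖) (v : E) :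
    |g (x + v) - g x - inner ℝ (g' x) v| ≤ L / 2 * ‖v‖ ^ 2 := by
  set φ : ℝ → ℝ := fun t => g (x + t • v) - g x - t * inner ℝ (g' x) v
  have hφ : ∀ t, HasDerivAt φ (inner ℝ (g' (x + t • v) - g' x) v) t := by
    intro t
    have hline : HasDerivAt (fun t : ℝ => x + t • v) v t := by
      simpa using ((hasDerivAt_id t).smul_const v).const_add x
    have hcomp := (hg (x + t • v)).hasFDerivAt.comp_hasDerivAt t hline
    refine ((hcomp.sub_const (g x)).sub ((hasDerivAt_id t).mul_const _)).congr_deriv ?_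
    simp [inner_sub_left]
  have hB : ∀ t, HasDerivAt (fun t : ℝ => L / 2 * ‖v‖ ^ 2 * t ^ 2) (L * ‖v‖ ^ 2 * t) t := by
    intro t
    refine ((hasDerivAt_pow 2 t).const_mul (L / 2 * ‖v‖ ^ 2)).congr_deriv ?_
    ring
  have hbound : ∀ t ∈ Set.Ico (0 : ℝ) 1,
      ‖inner ℝ (g' (x + t • v) - g' x) v‖ ≤ L * ‖v‖ ^ 2 * t := by
    rintro t ⟨ht, -⟩
    calc ‖inner ℝ (g' (x + t • v) - g' x) v‖ ≤ ‖g' (x + t • v) - g' x‖ * ‖v‖ :=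
          norm_inner_le_norm _ _
      _ ≤ L * ‖(x + t • v) - x‖ * ‖v‖ := by gcongr; exact hlip _
      _ = L * ‖v‖ ^ 2 * t := by
          rw [add_sub_cancel_left, norm_smul, Real.norm_of_nonneg ht]; ring
  have h := image_norm_le_of_norm_deriv_right_le_deriv_boundary
    (fun t _ => (hφ t).continuousAt.continuousWithinAt) (fun t _ => (hφ t).hasDerivWithinAt)
    (by simp [φ]) hB hbound (Set.right_mem_Icc.2 zero_le_one)
  simpa [φ] using h

theorem abs_twoPoint_sub_inner_le_of_gradient_lipschitz {g : E → ℝ} {g' : E → E} {L : ℝ} {x : E}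
    (hg : ∀ y, HasGradientAt g (g' y) y) (hlip : ∀ y, ‖g' y - g' x‖ ≤ L * ‖y - x‖)
    {u : E} (hu : ‖u‖ = 1) {β : ℝ} (hβ : 0 < β) :
    |(g (x + β • u) - g x) / β - inner ℝ u (g' x)| ≤ L * β / 2 := by
  have h := abs_sub_sub_inner_le_of_gradient_lipschitz hg hlip (β • u)
  rw [norm_smul, hu, Real.norm_of_nonneg hβ.le, inner_smul_right, real_inner_comm] at h
  have hquot : (g (x + β • u) - g x) / β - inner ℝ u (g' x)
      = (g (x + β • u) - g x - β * inner ℝ u (g' x)) / β := by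
    field_simp
  rw [hquot, abs_div, abs_of_pos hβ, div_le_iff₀ hβ]
  calc _ ≤ _ := h
    _ = L * β / 2 * β := by ring
end

theorem norm_sum_smul_sq_of_orthonormal {ι E : Type*} [NormedAddCommGroup E]
    [InnerProductSpace ℝ E] {s : Finset ι} {v : ι → E} (hv : Orthonormal ℝ fun i : s => v i)
    (c : ι → ℝ) : ‖∑ i ∈ s, c i • v i‖ ^ 2 = ∑ i ∈ s, c i ^ 2 := by
  rw [← Finset.sum_coe_sort s, ← Finset.sum_coe_sort s, ← real_inner_self_eq_norm_sq,
    hv.inner_sum]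
  simp [sq]

theorem PerIndexOrthonormal.orthonormal_fiber {S : Finset (Fin n × EuclideanSpace ℝ (Fin d))}
    (hS : PerIndexOrthonormal S) (i : Fin n) :
    Orthonormal ℝ fun p : ↥(S.filter (·.1 = i)) => (p : Fin n × EuclideanSpace ℝ (Fin d)).2 := by
  refine ⟨fun p => hS.1 _ (mem_filter.1 p.2).1, fun p q hpq => ?_⟩
  obtain ⟨hp, hpi⟩ := mem_filter.1 p.2
  obtain ⟨hq, hqi⟩ := mem_filter.1 q.2
  refine hS.2 _ hp _ hq (hpi.trans hqi.symm) fun h => hpq ?_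
  exact Subtype.ext (Prod.ext (hpi.trans hqi.symm) h)

theorem frobSq_eq_sum_norm_col_sq (A : Matrix (Fin d) (Fin n) ℝ) :
    frobSq A = ∑ i, ‖WithLp.toLp 2 (fun j => A j i)‖ ^ 2 := by
  simp [frobSq, EuclideanSpace.norm_sq_eq, Finset.sum_comm (γ := Fin n)]

theorem frobSq_sum_rankOne {S : Finset (Fin n × EuclideanSpace ℝ (Fin d))}
    (hS : PerIndexOrthonormal S) (c : Fin n × EuclideanSpace ℝ (Fin d) → ℝ) :
    frobSq (∑ p ∈ S, Matrix.of fun j i => if i = p.1 then c p * p.2 j else 0) =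
      ∑ p ∈ S, c p ^ 2 := by
  have hcol : ∀ i, WithLp.toLp 2 (fun j =>
      (∑ p ∈ S, Matrix.of fun j i => if i = p.1 then c p * p.2 j else 0 : Matrix _ _ ℝ) j i) =
      ∑ p ∈ S with p.1 = i, c p • p.2 := by
    intro i
    ext j
    simp only [Matrix.sum_apply, Matrix.of_apply, Finset.sum_filter]
    rw [WithLp.ofLp_sum, Finset.sum_apply]
    refine Finset.sum_congr rfl fun p _ => ?_
    split_ifs <;> simp_all [eq_comm]
  rw [frobSq_eq_sum_norm_col_sq]
  simp_rw [hcol, norm_sum_smul_sq_of_orthonormal (hS.orthonormal_fiber _)]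
  exact Finset.sum_fiberwise S Prod.fst (fun p => c p ^ 2)

theorem EuclideanSpace.real_inner_eq_sum_mul {ι : Type*} [Fintype ι] (u w : EuclideanSpace ℝ ι) :
    inner ℝ u w = ∑ l, u l * w l := by
  simp [PiLp.inner_apply, mul_comm]

/-- `‖G − P(∇F(x))‖_F² ≤ |S| L² β² / 4` where `G` collects the two-point
estimators `∇̂_u fᵢ(x;β) eᵢᵀ` over `(i,u) ∈ S`. -/
theorem stmt6 (f : Fin n → EuclideanSpace ℝ (Fin d) → ℝ)
    (f' : Fin n → EuclideanSpace ℝ (Fin d) → EuclideanSpace ℝ (Fin d))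
    (L : ℝ)
    (hdiff : ∀ i x, HasGradientAt (f i) (f' i x) x)
    (hlip : ∀ i x y, ‖f' i x - f' i y‖ ≤ L * ‖x - y‖)
    (S : Finset (Fin n × EuclideanSpace ℝ (Fin d)))
    (hS : PerIndexOrthonormal S)
    (β : ℝ) (hβ : 0 < β) (x : EuclideanSpace ℝ (Fin d)) :
    frobSq
        ((∑ p ∈ S, Matrix.of fun j i =>
            if i = p.1 then ((f p.1 (x + β • p.2) - f p.1 x) / β) * p.2 j else 0)
          - Pop S (Matrix.of fun j i => f' i x j)) ≤
      S.card * L ^ 2 * β ^ 2 / 4 := by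
  set c : Fin n × EuclideanSpace ℝ (Fin d) → ℝ := fun p =>
    (f p.1 (x + β • p.2) - f p.1 x) / β - inner ℝ p.2 (f' p.1 x)
  have hdecomp : (∑ p ∈ S, Matrix.of fun j i =>
        if i = p.1 then ((f p.1 (x + β • p.2) - f p.1 x) / β) * p.2 j else 0)
      - Pop S (Matrix.of fun j i => f' i x j) =
      ∑ p ∈ S, Matrix.of fun j i => if i = p.1 then c p * p.2 j else 0 := by
    rw [Pop, ← Finset.sum_sub_distrib]
    refine Finset.sum_congr rfl fun p _ => ?_
    ext j i
    simp only [Matrix.sub_apply, Matrix.of_apply]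
    split_ifs
    · simp only [c, EuclideanSpace.real_inner_eq_sum_mul]
      ring
    · simp
  have hc : ∀ p ∈ S, |c p| ≤ L * β / 2 := fun p hp =>
    abs_twoPoint_sub_inner_le_of_gradient_lipschitz (hdiff p.1) (fun y => hlip p.1 y x)
      (hS.1 p hp) hβ
  rw [hdecomp, frobSq_sum_rankOne hS]
  calc ∑ p ∈ S, c p ^ 2 ≤ S.card • (L * β / 2) ^ 2 :=
        Finset.sum_le_card_nsmul _ _ _ fun p hp => (abs_le.mp (hc p hp)).elim sq_le_sq'
    _ = S.card * L ^ 2 * β ^ 2 / 4 := by rw [nsmul_eq_mul]; ring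
end
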